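/- For every finite simple graph G and all integers d ≥ 0 and b ≥ 1, the b-fold d-improper chromatic number of G ⊠ K_{d+1} equals the d-improper chromatic number of G ⊠ K_{d+1} ⊠ K_b: χ_b^d(G ⊠ K_{d+1}) = χ^d(G ⊠ K_{d+1} ⊠ K_b). -/

import Mathlib

open SimpleGraph Finset Matrix

namespace ImproperPaper

variable {V W : Type*}

/-- The strong product of two simple graphs. -/
def strongProd (G : SimpleGraph V) (H : SimpleGraph W) : SimpleGraph (V × W) where
  Adj p q := (p.1 = q.1 ∧ H.Adj p.2 q.2) ∨ (G.Adj p.1 q.1 ∧ p.2 = q.2) ∨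
    (G.Adj p.1 q.1 ∧ H.Adj p.2 q.2)
  symm := by
    constructor
    rintro ⟨a, b⟩ ⟨x, y⟩ (⟨h1, h2⟩ | ⟨h1, h2⟩ | ⟨h1, h2⟩)
    · exact Or.inl ⟨h1.symm, h2.symm⟩
    · exact Or.inr (Or.inl ⟨h1.symm, h2.symm⟩)
    · exact Or.inr (Or.inr ⟨h1.symm, h2.symm⟩)
  loopless := by
    constructor
    rintro ⟨a, b⟩ (⟨h1, h2⟩ | ⟨h1, h2⟩ | ⟨h1, h2⟩)
    · exact H.irrefl h2
    · exact G.irrefl h1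
    · exact G.irrefl h1

/-- The lexicographical product of two simple graphs. -/
def lexProd (G : SimpleGraph V) (H : SimpleGraph W) : SimpleGraph (V × W) where
  Adj p q := G.Adj p.1 q.1 ∨ (p.1 = q.1 ∧ H.Adj p.2 q.2)
  symm := by
    constructor
    rintro ⟨a, b⟩ ⟨x, y⟩ (h | ⟨h1, h2⟩)
    · exact Or.inl h.symm
    · exact Or.inr ⟨h1.symm, h2.symm⟩
  loopless := by
    constructor
    rintro ⟨a, b⟩ (h | ⟨h1, h2⟩)
    · exact G.irrefl h
    · exact H.irrefl h2

instance {G : SimpleGraph V} {H : SimpleGraph W} [DecidableEq V] [DecidableEq W]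
    [DecidableRel G.Adj] [DecidableRel H.Adj] : DecidableRel (strongProd G H).Adj := fun p q =>
  show Decidable ((p.1 = q.1 ∧ H.Adj p.2 q.2) ∨ (G.Adj p.1 q.1 ∧ p.2 = q.2) ∨
    (G.Adj p.1 q.1 ∧ H.Adj p.2 q.2)) from inferInstance

/-- A colouring is `d`-improper if every colour class induces a subgraph of
maximum degree at most `d`. -/
def IsImproperColoring (G : SimpleGraph V) (d : ℕ) {α : Type*} (c : V → α) : Prop :=
  ∀ v : V, ({w | G.Adj v w ∧ c w = c v} : Set V).ncard ≤ d

/-- The `d`-improper chromatic number. -/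
noncomputable def improperChromaticNumber (G : SimpleGraph V) (d : ℕ) : ℕ :=
  sInf {n | ∃ c : V → Fin n, IsImproperColoring G d c}

/-- A colouring is `t`-clustered if every monochromatic connected component has at
most `t` vertices. -/
def IsClusteredColoring (G : SimpleGraph V) (t : ℕ) {α : Type*} (c : V → α) : Prop :=
  ∀ v : V,
    ({w | Relation.ReflTransGen (fun a b => G.Adj a b ∧ c a = c b) v w} : Set V).ncard ≤ t

/-- The `t`-clustered chromatic number. -/
noncomputable def clusteredChromaticNumber (G : SimpleGraph V) (t : ℕ) : ℕ :=
  sInf {n | ∃ c : V → Fin n, IsClusteredColoring G t c}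

/-- The chromatic number: least `n` admitting a proper colouring with `n` colours. -/
noncomputable def chromNum (G : SimpleGraph V) : ℕ :=
  sInf {n | ∃ c : V → Fin n, ∀ u v, G.Adj u v → c u ≠ c v}

/-- The `b`-fold `d`-improper chromatic number: least number of colours in an assignment
of `b` colours to each vertex such that, for every colour `x`, the set of vertices whose
colour set contains `x` induces a subgraph of maximum degree at most `d`. -/
noncomputable def bFoldImproperChromaticNumber (G : SimpleGraph V) (b d : ℕ) : ℕ :=
  sInf {n | ∃ c : V → Finset (Fin n), (∀ v, (c v).card = b) ∧
    ∀ v : V, ∀ x ∈ c v, ({w | G.Adj v w ∧ x ∈ c w} : Set V).ncard ≤ d}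

/-- The (proper) `b`-fold chromatic number. -/
noncomputable def bFoldChromaticNumber (G : SimpleGraph V) (b : ℕ) : ℕ :=
  bFoldImproperChromaticNumber G b 0

/-- The `b`-fold `t`-clustered chromatic number. -/
noncomputable def bFoldClusteredChromaticNumber (G : SimpleGraph V) (b t : ℕ) : ℕ :=
  sInf {n | ∃ c : V → Finset (Fin n), (∀ v, (c v).card = b) ∧
    ∀ x : Fin n, ∀ v : V, x ∈ c v →
      ({w | Relation.ReflTransGen (fun a b' => G.Adj a b' ∧ x ∈ c a ∧ x ∈ c b') v w} :
        Set V).ncard ≤ t}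

/-- The fractional chromatic number `χ_f(G) = inf { χ_b(G)/b : b ≥ 1 }`. -/
noncomputable def fracChromaticNumber (G : SimpleGraph V) : ℝ :=
  sInf {x : ℝ | ∃ b : ℕ, 0 < b ∧ x = (bFoldChromaticNumber G b : ℝ) / b}

/-- The fractional `d`-improper chromatic number. -/
noncomputable def fracImproperChromaticNumber (G : SimpleGraph V) (d : ℕ) : ℝ :=
  sInf {x : ℝ | ∃ b : ℕ, 0 < b ∧ x = (bFoldImproperChromaticNumber G b d : ℝ) / b}

/-- The fractional `t`-clustered chromatic number. -/
noncomputable def fracClusteredChromaticNumber (G : SimpleGraph V) (t : ℕ) : ℝ :=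
  sInf {x : ℝ | ∃ b : ℕ, 0 < b ∧ x = (bFoldClusteredChromaticNumber G b t : ℝ) / b}

/-- `lam` lists the eigenvalues of the Hermitian matrix `A` (with multiplicity) in
non-increasing order. -/
def IsEigList {n : ℕ} {A : Matrix (Fin n) (Fin n) ℝ} (hA : A.IsHermitian)
    (lam : Fin n → ℝ) : Prop :=
  Antitone lam ∧ ∃ σ : Equiv.Perm (Fin n), lam = hA.eigenvalues ∘ σ

/-- The largest size of a vertex subset inducing a subgraph of maximum degree at most `d`. -/
noncomputable def maxImproperIndep (G : SimpleGraph V) (d : ℕ) : ℕ :=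
  sSup {k | ∃ s : Set V, s.ncard = k ∧ ∀ v ∈ s, ({w | w ∈ s ∧ G.Adj v w} : Set V).ncard ≤ d}

end ImproperPaper

/-!
`G ⊠ K_{d+1} ⊠ K_b` is `G ⊠ K_{d+1}` with every vertex blown up into a clique of size `b`.
Listing the `b` colours of a vertex on its `b` copies turns a `b`-fold `d`-improper colouring
into a `d`-improper one. Conversely, in a `d`-improper colouring of `G ⊠ K_{d+1} ⊠ K_b` the fibre
over `u ∈ V(G)` is a clique of size `(d+1)b`, so it sees every colour at most `d + 1` times.
Sorting the colours of the fibre and dealing them round-robin to the `d + 1` vertices over `u`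
gives each of them `b` distinct colours. A neighbour of `(u, a)` holding colour `x` is then
charged to the vertex of its own fibre that carries `x`, a same-coloured neighbour of the one
that gave `x` to `(u, a)`; so `d`-improperness survives.
-/

namespace ImproperPaper

variable {V W α : Type*}

theorem strongProd_top_adj {G : SimpleGraph V} {p q : V × W} :
    (strongProd G ⊤).Adj p q ↔ p ≠ q ∧ (p.1 = q.1 ∨ G.Adj p.1 q.1) := by
  obtain ⟨u, i⟩ := p
  obtain ⟨u', i'⟩ := q
  by_cases hu : u = u' <;> by_cases hi : i = i' <;>
    simp [strongProd, hu, hi]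

theorem strongProd_strongProd_top_adj {G : SimpleGraph V} {S T : Type*} {p q : (V × S) × T} :
    (strongProd (strongProd G ⊤) ⊤).Adj p q ↔ p ≠ q ∧ (p.1.1 = q.1.1 ∨ G.Adj p.1.1 q.1.1) := by
  simp only [strongProd_top_adj]
  constructor
  · rintro ⟨hpq, h | ⟨-, h⟩⟩
    · exact ⟨hpq, Or.inl (congrArg Prod.fst h)⟩
    · exact ⟨hpq, h⟩
  · rintro ⟨hpq, h⟩
    refine ⟨hpq, ?_⟩
    by_cases h1 : p.1 = q.1
    · exact Or.inl h1
    · exact Or.inr ⟨h1, h⟩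

def IsBFoldImproperColoring (G : SimpleGraph V) (b d : ℕ) (c : V → Finset α) : Prop :=
  (∀ v, (c v).card = b) ∧ ∀ v, ∀ x ∈ c v, ({w | G.Adj v w ∧ x ∈ c w} : Set V).ncard ≤ d

theorem bFoldImproperChromaticNumber_eq_sInf (G : SimpleGraph V) (b d : ℕ) :
    bFoldImproperChromaticNumber G b d =
      sInf {n | ∃ c : V → Finset (Fin n), IsBFoldImproperColoring G b d c} := rfl

theorem IsBFoldImproperColoring.exists_isImproperColoring_strongProd_top [LinearOrder α]
    [Finite V] {G : SimpleGraph V} {b d : ℕ} {c : V → Finset α}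
    (hc : IsBFoldImproperColoring G b d c) :
    ∃ c' : V × Fin b → α, IsImproperColoring (strongProd G ⊤) d c' := by
  set c' : V × Fin b → α := fun p => (c p.1).orderEmbOfFin (hc.1 p.1) p.2
  have hmem (p : V × Fin b) : c' p ∈ c p.1 := Finset.orderEmbOfFin_mem _ _ _
  have hslot {p q : V × Fin b} (h1 : p.1 = q.1) (hcol : c' p = c' q) : p = q := by
    obtain ⟨u, i⟩ := p
    obtain ⟨u', i'⟩ := q
    subst h1
    exact Prod.ext rfl (((c u).orderEmbOfFin (hc.1 u)).injective hcol)
  refine ⟨c', fun v => ?_⟩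
  refine (Set.ncard_le_ncard_of_injOn Prod.fst ?_ ?_ (Set.toFinite _)).trans
    (hc.2 v.1 _ (hmem v))
  · rintro w ⟨hvw, hcol⟩
    rw [strongProd_top_adj] at hvw
    exact ⟨hvw.2.resolve_left fun h => hvw.1 (hslot h hcol.symm), hcol ▸ hmem w⟩
  · rintro w ⟨-, hw⟩ w' ⟨-, hw'⟩ h
    exact hslot h (hw.trans hw'.symm)

theorem IsImproperColoring.card_le_of_isClique [Finite V] {G : SimpleGraph V} {d : ℕ}
    {c : V → α} (hc : IsImproperColoring G d c) {s : Finset V} (hs : G.IsClique (s : Set V))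
    {x : α} (hx : ∀ v ∈ s, c v = x) : s.card ≤ d + 1 := by
  classical
  obtain rfl | ⟨v, hv⟩ := s.eq_empty_or_nonempty
  · simp
  have herase : ((s.erase v : Finset V) : Set V) ⊆ {w | G.Adj v w ∧ c w = c v} := by
    intro w hw
    rw [Finset.coe_erase, Set.mem_sdiff, Set.mem_singleton_iff] at hw
    exact ⟨hs hv hw.1 (Ne.symm hw.2), (hx w hw.1).trans (hx v hv).symm⟩
  have := (Set.ncard_le_ncard herase (Set.toFinite _)).trans (hc v)
  rw [Set.ncard_coe_finset, Finset.card_erase_of_mem hv] at this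
  omega

theorem IsImproperColoring.card_fiber_le [DecidableEq α] [Finite V] {S T : Type*} [Fintype S]
    [Fintype T] {G : SimpleGraph V} {d : ℕ} {c : (V × S) × T → α}
    (hc : IsImproperColoring (strongProd (strongProd G ⊤) ⊤) d c) (u : V) (x : α) :
    #{p : S × T | c ((u, p.1), p.2) = x} ≤ d + 1 := by
  let ι : S × T ↪ (V × S) × T :=
    ⟨fun p => ((u, p.1), p.2), fun p q h => by simpa [Prod.ext_iff] using h⟩
  rw [← Finset.card_map ι]
  refine hc.card_le_of_isClique ?_ (x := x) ?_
  · intro v hv w hw hvw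
    simp only [Finset.coe_map, Set.mem_image, Finset.mem_coe] at hv hw
    obtain ⟨p, -, rfl⟩ := hv
    obtain ⟨q, -, rfl⟩ := hw
    exact strongProd_strongProd_top_adj.2 ⟨hvw, Or.inl rfl⟩
  · simp only [Finset.mem_map, Finset.mem_filter, Finset.mem_univ, true_and]
    rintro _ ⟨p, hp, rfl⟩
    exact hp

theorem sub_lt_of_monotone_of_card_fiber_le [PartialOrder α] [DecidableEq α] {m t : ℕ}
    {h : Fin m → α} (hh : Monotone h) (hfib : ∀ x, #{k | h k = x} ≤ t) {k k' : Fin m} (hk : k ≤ k')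
    (heq : h k = h k') : (k' : ℕ) - k < t := by
  have hsub : Finset.Icc k k' ⊆ ({j | h j = h k} : Finset (Fin m)) := by
    intro j hj
    rw [Finset.mem_Icc] at hj
    simp only [Finset.mem_filter, Finset.mem_univ, true_and]
    exact le_antisymm (heq ▸ hh hj.2) (hh hj.1)
  have := (Finset.card_le_card hsub).trans (hfib (h k))
  rw [Fin.card_Icc] at this
  omega

/-- Sort the values and deal them out round-robin: a value occurring at most `t` times
occupies at most `t` consecutive sorted positions, hence at most one position per row. -/
theorem exists_equiv_forall_injective [LinearOrder α] {t b : ℕ} (f : Fin t × Fin b → α)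
    (hf : ∀ x, #{p | f p = x} ≤ t) :
    ∃ e : Fin t × Fin b ≃ Fin t × Fin b, ∀ a, Function.Injective fun j => f (e (a, j)) := by
  set r : Fin t × Fin b ≃ Fin (b * t) := (Equiv.prodComm _ _).trans finProdFinEquiv
  have hr (a : Fin t) (j : Fin b) : (r (a, j) : ℕ) = a + t * j := rfl
  set σ := Tuple.sort (f ∘ r.symm)
  have hmono : Monotone ((f ∘ r.symm) ∘ σ) := Tuple.monotone_sort _
  have hfib : ∀ x, #{k | ((f ∘ r.symm) ∘ σ) k = x} ≤ t := fun x =>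
    (Finset.card_equiv (σ.trans r.symm) (by simp)).le.trans (hf x)
  refine ⟨r.trans (σ.trans r.symm), fun a j j' hjj' => ?_⟩
  wlog hle : j ≤ j' generalizing j j'
  · exact (this j' j hjj'.symm (le_of_not_ge hle)).symm
  have hrle : r (a, j) ≤ r (a, j') := by
    rw [Fin.le_iff_val_le_val, hr, hr]
    exact Nat.add_le_add_left (Nat.mul_le_mul_left t hle) a
  have := sub_lt_of_monotone_of_card_fiber_le hmono hfib hrle (by simpa using hjj')
  rw [hr, hr, Nat.add_sub_add_left, ← Nat.mul_sub] at this
  have : (j' : ℕ) - j = 0 := by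
    by_contra h0
    exact absurd this (not_lt.2 (Nat.le_mul_of_pos_right t (Nat.pos_of_ne_zero h0)))
  exact Fin.ext (by omega)

theorem IsImproperColoring.exists_isBFoldImproperColoring [LinearOrder α] [Finite V]
    {G : SimpleGraph V} {d t b : ℕ} (ht : d + 1 ≤ t) {c : (V × Fin t) × Fin b → α}
    (hc : IsImproperColoring (strongProd (strongProd G ⊤) ⊤) d c) :
    ∃ c' : V × Fin t → Finset α, IsBFoldImproperColoring (strongProd G ⊤) b d c' := by
  choose e he using fun u =>
    exists_equiv_forall_injective _ fun x => (hc.card_fiber_le u x).trans ht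
  set c' : V × Fin t → Finset α :=
    fun v => Finset.univ.image fun j => c ((v.1, (e v.1 (v.2, j)).1), (e v.1 (v.2, j)).2)
  refine ⟨c', fun v => by rw [Finset.card_image_of_injective _ (he v.1 v.2), Finset.card_univ,
    Fintype.card_fin], ?_⟩
  rintro ⟨u, a⟩ x hx
  obtain ⟨j₀, -, hj₀⟩ := Finset.mem_image.1 hx
  set v₀ : (V × Fin t) × Fin b := ((u, (e u (a, j₀)).1), (e u (a, j₀)).2)
  let owner : (V × Fin t) × Fin b → V × Fin t := fun w => (w.1.1, ((e w.1.1).symm (w.1.2, w.2)).1)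
  have hsub : {w | (strongProd G ⊤).Adj (u, a) w ∧ x ∈ c' w} ⊆
      owner '' {w | (strongProd (strongProd G ⊤) ⊤).Adj v₀ w ∧ c w = c v₀} := by
    rintro ⟨u', a'⟩ ⟨hadj, hx'⟩
    obtain ⟨j', -, hj'⟩ := Finset.mem_image.1 hx'
    rw [strongProd_top_adj] at hadj
    refine ⟨((u', (e u' (a', j')).1), (e u' (a', j')).2), ⟨?_, hj'.trans hj₀.symm⟩, by simp [owner]⟩
    refine strongProd_strongProd_top_adj.2 ⟨fun h => hadj.1 ?_, hadj.2⟩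
    simp only [v₀, Prod.ext_iff] at h
    obtain ⟨⟨rfl, h₁⟩, h₂⟩ := h
    have := (e u).injective (Prod.ext h₁ h₂)
    simp only [Prod.ext_iff] at this
    rw [this.1]
  exact (Set.ncard_le_ncard hsub (Set.toFinite _)).trans
    ((Set.ncard_image_le (Set.toFinite _)).trans (hc v₀))

end ImproperPaper

open ImproperPaper in

theorem stmt_7_general {V : Type*} [Fintype V] (G : SimpleGraph V) (d b : ℕ) :
    bFoldImproperChromaticNumber (strongProd G (⊤ : SimpleGraph (Fin (d + 1)))) b d =
      improperChromaticNumber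
        (strongProd (strongProd G (⊤ : SimpleGraph (Fin (d + 1))))
          (⊤ : SimpleGraph (Fin b))) d := by
  rw [bFoldImproperChromaticNumber_eq_sInf]
  refine congrArg sInf (Set.ext fun n => ⟨?_, ?_⟩)
  · rintro ⟨c, hc⟩
    exact hc.exists_isImproperColoring_strongProd_top
  · rintro ⟨c, hc⟩
    exact hc.exists_isBFoldImproperColoring le_rfl

open ImproperPaper in
theorem stmt_7 {V : Type*} [Fintype V] (G : SimpleGraph V) (d b : ℕ) (hb : 1 ≤ b) :
    bFoldImproperChromaticNumber (strongProd G (⊤ : SimpleGraph (Fin (d + 1)))) b d =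
      improperChromaticNumber
        (strongProd (strongProd G (⊤ : SimpleGraph (Fin (d + 1))))
          (⊤ : SimpleGraph (Fin b))) d :=
  stmt_7_general G d b
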